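/- arXiv:2206.07743 — 3 statements merged into one kernel-verified Lean document; each statement's English description precedes it below -/
import Mathlib

section
/- (Donsker–Varadhan type lower bound used by MINE) Let A, B be random variables on finite probability spaces with joint distribution P_{A,B} and marginals P_A, P_B. For any real-valued function T(a,b), the mutual information satisfies MI(A,B) ≥ E_{P_{A,B}}[T(A,B)] − log E_{P_A ⊗ P_B}[e^{T(A,B)}]. -/
theorem stmt10 {A B : Type*} [Fintype A] [Fintype B]
    (p : A → B → ℝ) (hp : ∀ a b, 0 ≤ p a b) (hsum : ∑ a, ∑ b, p a b = 1)
    (T : A → B → ℝ) :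
    (∑ a, ∑ b, p a b * T a b) -
        Real.log (∑ a, ∑ b, (∑ b', p a b') * (∑ a', p a' b) * Real.exp (T a b)) ≤
      ∑ a, ∑ b, p a b * Real.log (p a b / ((∑ b', p a b') * (∑ a', p a' b))) := by
  classical
  have e : ∀ (g : A → B → ℝ), ∑ a, ∑ b, g a b = ∑ x : A × B, g x.1 x.2 :=
    fun g => (Fintype.sum_prod_type (f := fun x : A × B => g x.1 x.2)).symm
  rw [e, e, e]
  rw [e] at hsum
  set P : A × B → ℝ := fun x => p x.1 x.2 with hP
  set Q : A × B → ℝ := fun x => (∑ b', p x.1 b') * (∑ a', p a' x.2) with hQ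
  set E : A × B → ℝ := fun x => T x.1 x.2 with hE
  have hPnn : ∀ x, 0 ≤ P x := fun x => hp _ _
  have hQnn : ∀ x, 0 ≤ Q x := fun x =>
    mul_nonneg (Finset.sum_nonneg fun i _ => hp _ i) (Finset.sum_nonneg fun i _ => hp i _)
  have hQpos : ∀ x, 0 < P x → 0 < Q x := by
    intro x hx
    have h1 : P x ≤ ∑ b', p x.1 b' :=
      Finset.single_le_sum (fun i _ => hp x.1 i) (Finset.mem_univ x.2)
    have h2 : P x ≤ ∑ a', p a' x.2 :=
      Finset.single_le_sum (fun i _ => hp i x.2) (Finset.mem_univ x.1)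
    exact mul_pos (lt_of_lt_of_le hx h1) (lt_of_lt_of_le hx h2)
  rw [sub_le_iff_le_add, ← sub_le_iff_le_add']
  have key : (∑ x : A × B, P x * E x) - (∑ x : A × B, P x * Real.log (P x / Q x))
      = ∑ x : A × B, P x * Real.log (Q x * Real.exp (E x) / P x) := by
    rw [← Finset.sum_sub_distrib]
    refine Finset.sum_congr rfl fun x _ => ?_
    rcases eq_or_lt_of_le (hPnn x) with h0 | h0
    · simp [← h0]
    · have hq := hQpos x h0
      rw [Real.log_div (by positivity) (ne_of_gt h0),
        Real.log_div (ne_of_gt h0) (ne_of_gt hq), Real.log_mul (ne_of_gt hq)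
          (Real.exp_ne_zero _), Real.log_exp]
      ring
  rw [key]
  set s : Finset (A × B) := Finset.univ.filter (fun x => 0 < P x) with hs
  have hzero : ∀ x ∈ Finset.univ (α := A × B), x ∉ s → P x = 0 := by
    intro x _ hx
    simp only [hs, Finset.mem_filter, Finset.mem_univ, true_and] at hx
    exact le_antisymm (not_lt.mp hx) (hPnn x)
  have hws : ∑ x ∈ s, P x = 1 := by
    rw [Finset.sum_subset (Finset.subset_univ s) (fun x h1 h2 => hzero x h1 h2)]
    exact hsum
  have hsne : s.Nonempty := by
    rw [Finset.nonempty_iff_ne_empty]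
    intro h
    rw [h, Finset.sum_empty] at hws
    norm_num at hws
  have hmem : ∀ x ∈ s, Q x * Real.exp (E x) / P x ∈ Set.Ioi (0 : ℝ) := by
    intro x hx
    simp only [hs, Finset.mem_filter] at hx
    have h1 := hQpos x hx.2
    have h2 := hx.2
    exact Set.mem_Ioi.mpr (by positivity)
  have jensen := strictConcaveOn_log_Ioi.concaveOn.le_map_sum
    (t := s) (w := P) (p := fun x => Q x * Real.exp (E x) / P x)
    (fun x _ => hPnn x) hws hmem
  simp only [smul_eq_mul] at jensen
  have h1 : ∑ x : A × B, P x * Real.log (Q x * Real.exp (E x) / P x)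
      = ∑ x ∈ s, P x * Real.log (Q x * Real.exp (E x) / P x) := by
    refine (Finset.sum_subset (Finset.subset_univ s) ?_).symm
    intro x h1 h2
    rw [hzero x h1 h2, zero_mul]
  have h2 : ∑ x ∈ s, P x * (Q x * Real.exp (E x) / P x) = ∑ x ∈ s, Q x * Real.exp (E x) := by
    refine Finset.sum_congr rfl fun x hx => ?_
    simp only [hs, Finset.mem_filter] at hx
    rw [mul_comm, div_mul_cancel₀ _ (ne_of_gt hx.2)]
  rw [h1]
  refine jensen.trans ?_
  rw [h2]
  have hposs : 0 < ∑ x ∈ s, Q x * Real.exp (E x) := by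
    refine Finset.sum_pos ?_ hsne
    intro x hx
    simp only [hs, Finset.mem_filter] at hx
    have := hQpos x hx.2
    positivity
  refine Real.log_le_log hposs ?_
  refine Finset.sum_le_sum_of_subset_of_nonneg (Finset.subset_univ s) ?_
  intro x _ _
  have := hQnn x
  positivity
end

section
/- Let ∈ ℝ^{N×N} be a symmetric row-and-column normalized adjacency matrix = D̃^{-1/2}(A + I)D̃^{-1/2} of a connected undirected graph with self-loops, where D̃ is the diagonal degree matrix of A + I. Then the eigenvalue 1 of is simple with eigenvector proportional to D̃^{1/2}·1, all other eigenvalues have absolute value strictly less than 1, and consequently for any X ∈ ℝ^{N×d}, the powers Â^K X converge as K → ∞ to a matrix each of whose columns is a scalar multiple of D̃^{1/2}·1; in particular all rows of the limit are proportional to each other. -/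
/-!
Write `w = D̃^{-1/2} v`; then `Â v = μ v` becomes `(A + I) w = μ D̃ w`, and since the rows of
`A + I` sum to the diagonal of `D̃`, the entry of `(A + I) w` at a row is a weighted average of `w`
scaled by that row's `D̃`-entry. A maximum principle for such averages does all the work: at a
maximum of `|w|` it gives `|μ| ≤ 1`; for `μ = 1` it spreads the maximum of `w` along edges, so by
connectivity `w` is constant; for `μ = -1` the positive diagonal of `A + I` forces `w = 0`. Hence
the spectrum of the symmetric matrix `Â` lies in `(-1, 1]`, so `Â^K` converges to a matrix `P` with
`Â P = P`, whose columns are therefore multiples of `D̃^{1/2} 1`.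
-/

open Matrix Filter Topology Finset

section MaximumPrinciple

variable {n : Type*} [Fintype n] {M : Matrix n n ℝ} {d w : n → ℝ}

lemma eq_of_sum_mul_eq_sum_mul_of_le {a : n → ℝ} {c : ℝ} (ha : ∀ j, 0 ≤ a j)
    (hw : ∀ j, w j ≤ c) (h : ∑ j, a j * w j = (∑ j, a j) * c) {j : n} (hj : a j ≠ 0) :
    w j = c := by
  have hsum : ∑ j, a j * (c - w j) = 0 := by
    simp only [mul_sub, sum_sub_distrib, ← sum_mul, h, sub_self]
  have hterm := (sum_eq_zero_iff_of_nonneg fun j _ => mul_nonneg (ha j) (sub_nonneg.2 (hw j))).1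
    hsum j (mem_univ j)
  linarith [(mul_eq_zero.1 hterm).resolve_left hj]

variable (hM0 : ∀ i j, 0 ≤ M i j) (hrow : ∀ i, ∑ j, M i j = d i)
include hM0 hrow

lemma eq_of_pow_apply_ne_zero_of_le [DecidableEq n] (h : ∀ i, ∑ j, M i j * w j = d i * w i)
    {c : ℝ} (hmax : ∀ j, w j ≤ c) (k : ℕ) {i j : n} (hij : (M ^ k) i j ≠ 0) (hi : w i = c) :
    w j = c := by
  induction k generalizing j with
  | zero =>
    obtain rfl : i = j := by_contra fun hne => hij (one_apply_ne hne)
    exact hi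
  | succ k ih =>
    rw [pow_succ, mul_apply] at hij
    obtain ⟨l, -, hl⟩ := exists_ne_zero_of_sum_ne_zero hij
    have hwl := ih (left_ne_zero_of_mul hl)
    exact eq_of_sum_mul_eq_sum_mul_of_le (hM0 l) hmax (by rw [h l, hrow l, hwl])
      (right_ne_zero_of_mul hl)

lemma exists_forall_eq_of_sum_mul_eq [DecidableEq n] (hconn : ∀ i j, ∃ k : ℕ, 0 < (M ^ k) i j)
    (h : ∀ i, ∑ j, M i j * w j = d i * w i) : ∃ c, ∀ j, w j = c := by
  rcases isEmpty_or_nonempty n with _ | _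
  · exact ⟨0, fun j => isEmptyElim j⟩
  obtain ⟨i, hi⟩ := Finite.exists_max w
  refine ⟨w i, fun j => ?_⟩
  obtain ⟨k, hk⟩ := hconn i j
  exact eq_of_pow_apply_ne_zero_of_le hM0 hrow h hi k hk.ne' rfl

lemma abs_le_one_of_sum_mul_eq (hd : ∀ i, 0 < d i) (hw : w ≠ 0) {μ : ℝ}
    (h : ∀ i, ∑ j, M i j * w j = μ * (d i * w i)) : |μ| ≤ 1 := by
  obtain ⟨j₀, hj₀⟩ := Function.ne_iff.1 hw
  have : Nonempty n := ⟨j₀⟩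
  obtain ⟨i, hi⟩ := Finite.exists_max fun j => |w j|
  have hpos : 0 < d i * |w i| := mul_pos (hd i) ((abs_pos.2 hj₀).trans_le (hi j₀))
  refine (mul_le_iff_le_one_left hpos).1 ?_
  calc |μ| * (d i * |w i|) = |∑ j, M i j * w j| := by
        rw [h i, abs_mul, abs_mul, abs_of_pos (hd i)]
    _ ≤ ∑ j, M i j * |w j| := by
        refine (abs_sum_le_sum_abs _ _).trans_eq (sum_congr rfl fun j _ => ?_)
        rw [abs_mul, abs_of_nonneg (hM0 i j)]
    _ ≤ ∑ j, M i j * |w i| := sum_le_sum fun j _ => mul_le_mul_of_nonneg_left (hi j) (hM0 i j)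
    _ = d i * |w i| := by rw [← sum_mul, hrow]

variable (hdiag : ∀ i, 0 < M i i)
include hdiag

lemma eq_zero_of_sum_mul_eq_neg_of_abs_le (h : ∀ i, ∑ j, M i j * w j = -(d i * w i)) {i : n}
    (hi : ∀ j, |w j| ≤ w i) : w i = 0 := by
  have hsum : ∑ j, M i j * -w j = (∑ j, M i j) * w i := by
    simp only [mul_neg, sum_neg_distrib, h i, hrow i, neg_neg]
  have := eq_of_sum_mul_eq_sum_mul_of_le (hM0 i) (fun j => (neg_le_abs (w j)).trans (hi j)) hsum
    (hdiag i).ne'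
  linarith

lemma eq_zero_of_sum_mul_eq_neg (h : ∀ i, ∑ j, M i j * w j = -(d i * w i)) : w = 0 := by
  rcases isEmpty_or_nonempty n with _ | _
  · exact funext fun j => isEmptyElim j
  obtain ⟨i, hi⟩ := Finite.exists_max fun j => |w j|
  have hwi : |w i| = 0 := by
    rcases le_or_gt 0 (w i) with hpos | hneg
    · have := eq_zero_of_sum_mul_eq_neg_of_abs_le hM0 hrow hdiag h (i := i)
        (by simpa [abs_of_nonneg hpos] using hi)
      rw [this, abs_zero]
    · have h' : ∀ i, ∑ j, M i j * -w j = -(d i * -w i) := fun i => by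
        simp only [mul_neg, sum_neg_distrib, h i]
      have := eq_zero_of_sum_mul_eq_neg_of_abs_le (w := -w) hM0 hrow hdiag h' (i := i)
        (by simpa [abs_of_neg hneg] using hi)
      simpa [abs_of_neg hneg] using this
  exact funext fun j => abs_nonpos_iff.1 (hwi ▸ hi j)

end MaximumPrinciple

section Normalized

variable {n : Type*} [Fintype n] {M Ahat : Matrix n n ℝ} {d : n → ℝ}
  (hd : ∀ i, 0 < d i) (hAhat : ∀ i j, Ahat i j = M i j / (√(d i) * √(d j)))
include hd hAhat

lemma sum_mul_div_sqrt_eq_of_mulVec_eq_smul {v : n → ℝ} {μ : ℝ} (h : Ahat *ᵥ v = μ • v)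
    (i : n) :
    ∑ j, M i j * (v j / √(d j)) = μ * (d i * (v i / √(d i))) := by
  have hi := congrFun h i
  simp only [mulVec, dotProduct, hAhat, Pi.smul_apply, smul_eq_mul] at hi
  have hs : ∀ j, √(d j) ≠ 0 := fun j => (Real.sqrt_pos.2 (hd j)).ne'
  calc ∑ j, M i j * (v j / √(d j)) = √(d i) * ∑ j, M i j / (√(d i) * √(d j)) * v j := by
        rw [mul_sum]
        refine sum_congr rfl fun j _ => ?_
        field_simp [hs i, hs j]
    _ = μ * (d i * (v i / √(d i))) := by
        rw [hi]
        field_simp [hs i]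
        rw [Real.sq_sqrt (hd i).le]
        ring

lemma mulVec_sqrt_eq_sqrt (hrow : ∀ i, ∑ j, M i j = d i) :
    Ahat *ᵥ (fun i => √(d i)) = fun i => √(d i) := by
  funext i
  have hs : ∀ j, √(d j) ≠ 0 := fun j => (Real.sqrt_pos.2 (hd j)).ne'
  calc (Ahat *ᵥ fun i => √(d i)) i = (∑ j, M i j) / √(d i) := by
        simp only [mulVec, dotProduct, hAhat, sum_div]
        refine sum_congr rfl fun j _ => ?_
        field_simp [hs i, hs j]
    _ = √(d i) := by
        rw [hrow]
        field_simp [hs i]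
        rw [Real.sq_sqrt (hd i).le]

lemma eq_smul_sqrt_of_mulVec_eq_self [DecidableEq n] (hM0 : ∀ i j, 0 ≤ M i j)
    (hrow : ∀ i, ∑ j, M i j = d i) (hconn : ∀ i j, ∃ k : ℕ, 0 < (M ^ k) i j) {v : n → ℝ}
    (hv : Ahat *ᵥ v = v) : ∃ c : ℝ, v = c • fun i => √(d i) := by
  have h := sum_mul_div_sqrt_eq_of_mulVec_eq_smul hd hAhat (μ := 1) (by rwa [one_smul])
  simp only [one_mul] at h
  obtain ⟨c, hc⟩ := exists_forall_eq_of_sum_mul_eq hM0 hrow hconn h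
  refine ⟨c, funext fun j => ?_⟩
  rw [Pi.smul_apply, smul_eq_mul, ← hc j, div_mul_cancel₀ _ (Real.sqrt_pos.2 (hd j)).ne']

lemma mem_Ioc_of_mulVec_eq_smul (hM0 : ∀ i j, 0 ≤ M i j) (hrow : ∀ i, ∑ j, M i j = d i)
    (hdiag : ∀ i, 0 < M i i) {v : n → ℝ} (hv : v ≠ 0) {μ : ℝ} (h : Ahat *ᵥ v = μ • v) :
    μ ∈ Set.Ioc (-1) 1 := by
  have hw : (fun j => v j / √(d j)) ≠ 0 := by
    obtain ⟨j, hj⟩ := Function.ne_iff.1 hv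
    exact Function.ne_iff.2 ⟨j, div_ne_zero hj (Real.sqrt_pos.2 (hd j)).ne'⟩
  have heq := sum_mul_div_sqrt_eq_of_mulVec_eq_smul hd hAhat h
  obtain ⟨hle, hge⟩ := abs_le.1 (abs_le_one_of_sum_mul_eq hM0 hrow hd hw heq)
  refine ⟨lt_of_le_of_ne hle fun hμ => hw ?_, hge⟩
  refine eq_zero_of_sum_mul_eq_neg hM0 hrow hdiag fun i => ?_
  rw [heq i, ← hμ, neg_one_mul]

end Normalized

lemma isHermitian_of_apply_eq_div {n : Type*} {M Ahat : Matrix n n ℝ} {d : n → ℝ}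
    (hM : Mᵀ = M) (hAhat : ∀ i j, Ahat i j = M i j / (√(d i) * √(d j))) : Ahat.IsHermitian := by
  ext i j
  rw [conjTranspose_apply, star_trivial, hAhat, hAhat, ← transpose_apply M, hM, mul_comm]

lemma mul_eq_of_tendsto_pow {R : Type*} [Monoid R] [TopologicalSpace R] [ContinuousMul R]
    [T2Space R] {a P : R} (h : Tendsto (fun K : ℕ => a ^ K) atTop (𝓝 P)) : a * P = P := by
  refine tendsto_nhds_unique (h.const_mul a) ?_
  exact (h.comp (tendsto_add_atTop_nat 1)).congr fun K => pow_succ' a K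

lemma Matrix.IsHermitian.exists_tendsto_pow {𝕜 n : Type*} [RCLike 𝕜] [Fintype n]
    [DecidableEq n] {A : Matrix n n 𝕜} (hA : A.IsHermitian)
    (h : ∀ i, hA.eigenvalues i ∈ Set.Ioc (-1) 1) :
    ∃ P, Tendsto (fun K : ℕ => A ^ K) atTop (𝓝 P) := by
  set U : Matrix n n 𝕜 := (hA.eigenvectorUnitary : Matrix n n 𝕜)
  let L : n → 𝕜 := fun i => if hA.eigenvalues i = 1 then 1 else 0
  have hL : Tendsto (fun K : ℕ => fun i => (hA.eigenvalues i : 𝕜) ^ K) atTop (𝓝 L) := by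
    refine tendsto_pi_nhds.2 fun i => ?_
    by_cases hi : hA.eigenvalues i = 1
    · simp [L, hi]
    · have hlt : ‖(hA.eigenvalues i : 𝕜)‖ < 1 := by
        rw [RCLike.norm_ofReal]
        exact abs_lt.2 ⟨(h i).1, lt_of_le_of_ne (h i).2 hi⟩
      simpa [L, hi] using tendsto_pow_atTop_nhds_zero_of_norm_lt_one hlt
  have hconj : Continuous fun D : Matrix n n 𝕜 => U * D * star U :=
    (continuous_const.mul continuous_id).mul continuous_const
  refine ⟨_, ((hconj.tendsto _).comp ((continuous_id.matrix_diagonal.tendsto L).comp hL)).congr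
    fun K => ?_⟩
  conv_rhs => rw [hA.spectral_theorem, ← map_pow, diagonal_pow]
  rfl

lemma exists_tendsto_pow_mul_of_fixed_eq_smul {n m : Type*} [Fintype n] [DecidableEq n]
    {H P : Matrix n n ℝ} (hP : Tendsto (fun K : ℕ => H ^ K) atTop (𝓝 P)) {s : n → ℝ}
    (hfix : ∀ v, H *ᵥ v = v → ∃ c : ℝ, v = c • s) (X : Matrix n m ℝ) :
    ∃ c : m → ℝ, Tendsto (fun K : ℕ => H ^ K * X) atTop (𝓝 (of fun i j => c j * s i)) := by
  have hHP : H * P = P := mul_eq_of_tendsto_pow hP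
  have hcol : ∀ k, ∃ c : ℝ, (fun i => P i k) = c • s := fun k => hfix _ <| funext fun i => by
    conv_rhs => rw [← hHP]
    rfl
  choose c hc using hcol
  refine ⟨fun j => ∑ k, c k * X k j, ?_⟩
  have hlim : Tendsto (fun K : ℕ => H ^ K * X) atTop (𝓝 (P * X)) :=
    ((continuous_id.matrix_mul continuous_const).tendsto P).comp hP
  convert hlim using 2
  ext i j
  simp only [of_apply, mul_apply, sum_mul]
  refine sum_congr rfl fun k _ => ?_
  rw [show P i k = c k * s i from congrFun (hc k) i]
  ring

theorem stmt11_general {N : ℕ} (A : Matrix (Fin N) (Fin N) ℝ)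
    (hA01 : ∀ i j, A i j = 0 ∨ A i j = 1) (hsym : A.transpose = A)
    (hconn : ∀ i j : Fin N, ∃ k : ℕ, 0 < ((A + 1) ^ k) i j)
    (deg : Fin N → ℝ) (hdeg : ∀ i, deg i = 1 + ∑ j, A i j)
    (Ahat : Matrix (Fin N) (Fin N) ℝ)
    (hAhat : ∀ i j, Ahat i j = (A + 1) i j / (Real.sqrt (deg i) * Real.sqrt (deg j))) :
    (Ahat.mulVec (fun i => Real.sqrt (deg i)) = fun i => Real.sqrt (deg i)) ∧
    (∀ v : Fin N → ℝ, Ahat.mulVec v = v → ∃ c : ℝ, v = c • fun i => Real.sqrt (deg i)) ∧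
    (∀ (μ : ℝ) (v : Fin N → ℝ), v ≠ 0 → Ahat.mulVec v = μ • v →
      |μ| ≤ 1 ∧ (|μ| = 1 → μ = 1)) ∧
    (∀ (d : ℕ) (X : Matrix (Fin N) (Fin d) ℝ), ∃ c : Fin d → ℝ,
      Filter.Tendsto (fun K : ℕ => Ahat ^ K * X) Filter.atTop
        (nhds (Matrix.of fun i j => c j * Real.sqrt (deg i)))) := by
  set M := A + 1
  have hA0 : ∀ i j, 0 ≤ A i j := fun i j => by rcases hA01 i j with h | h <;> simp [h]
  have hM0 : ∀ i j, 0 ≤ M i j := fun i j =>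
    add_nonneg (hA0 i j) (by rw [one_apply]; split_ifs <;> norm_num)
  have hdiag : ∀ i, 0 < M i i := fun i => by simp [M, add_pos_of_nonneg_of_pos (hA0 i i)]
  have hrow : ∀ i, ∑ j, M i j = deg i := fun i => by
    simp [M, sum_add_distrib, hdeg, add_comm, one_apply]
  have hd : ∀ i, 0 < deg i := fun i =>
    hrow i ▸ sum_pos' (fun j _ => hM0 i j) ⟨i, mem_univ i, hdiag i⟩
  have hH := isHermitian_of_apply_eq_div (by rw [transpose_add, hsym, transpose_one]) hAhat
  have hfix : ∀ v, Ahat *ᵥ v = v → ∃ c : ℝ, v = c • fun i => √(deg i) := fun _ =>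
    eq_smul_sqrt_of_mulVec_eq_self hd hAhat hM0 hrow hconn
  obtain ⟨P, hP⟩ := hH.exists_tendsto_pow fun k =>
    mem_Ioc_of_mulVec_eq_smul hd hAhat hM0 hrow hdiag
      (fun h => hH.eigenvectorBasis.orthonormal.ne_zero k (by ext i; exact congrFun h i))
      (hH.mulVec_eigenvectorBasis k)
  refine ⟨mulVec_sqrt_eq_sqrt hd hAhat hrow, hfix, fun μ v hv h => ?_,
    fun _ X => exists_tendsto_pow_mul_of_fixed_eq_smul hP hfix X⟩
  obtain ⟨hlt, hle⟩ := mem_Ioc_of_mulVec_eq_smul hd hAhat hM0 hrow hdiag hv h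
  exact ⟨abs_le.2 ⟨hlt.le, hle⟩, fun habs => ((abs_eq zero_le_one).1 habs).resolve_right hlt.ne'⟩

theorem stmt11 {N : ℕ} (hN : 0 < N) (A : Matrix (Fin N) (Fin N) ℝ)
    (hA01 : ∀ i j, A i j = 0 ∨ A i j = 1) (hsym : A.transpose = A)
    (hconn : ∀ i j : Fin N, ∃ k : ℕ, 0 < ((A + 1) ^ k) i j)
    (deg : Fin N → ℝ) (hdeg : ∀ i, deg i = 1 + ∑ j, A i j)
    (Ahat : Matrix (Fin N) (Fin N) ℝ)
    (hAhat : ∀ i j, Ahat i j = (A + 1) i j / (Real.sqrt (deg i) * Real.sqrt (deg j))) :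
    (Ahat.mulVec (fun i => Real.sqrt (deg i)) = fun i => Real.sqrt (deg i)) ∧
    (∀ v : Fin N → ℝ, Ahat.mulVec v = v → ∃ c : ℝ, v = c • fun i => Real.sqrt (deg i)) ∧
    (∀ (μ : ℝ) (v : Fin N → ℝ), v ≠ 0 → Ahat.mulVec v = μ • v →
      |μ| ≤ 1 ∧ (|μ| = 1 → μ = 1)) ∧
    (∀ (d : ℕ) (X : Matrix (Fin N) (Fin d) ℝ), ∃ c : Fin d → ℝ,
      Filter.Tendsto (fun K : ℕ => Ahat ^ K * X) Filter.atTop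
        (nhds (Matrix.of fun i j => c j * Real.sqrt (deg i)))) :=
  stmt11_general A hA01 hsym hconn deg hdeg Ahat hAhat
end

section
/- Combining the previous two facts: if the symmetric normalized propagation Â^K X converges to a limit matrix X∞ whose rows are all positive multiples of a common nonzero vector v ∈ ℝ^d, and no column of X∞ is constant, then Corr(X∞) = 1 and SMV(X∞) = 0, i.e., infinite propagation simultaneously produces extreme overcorrelation and extreme oversmoothing. -/
/-! Every column of `X = a vᵀ` is the multiple `v j • a` of one vector `a`, so all pairs of columns
are perfectly (anti)correlated; every row is a positive multiple of `v`, so all rows normalize to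
`v / ‖v‖` and their pairwise distances vanish. -/

noncomputable def mean {N : ℕ} (x : Fin N → ℝ) : ℝ := (∑ i, x i) / N

noncomputable def center {N : ℕ} (x : Fin N → ℝ) : Fin N → ℝ := fun i => x i - mean x

noncomputable def pearson {N : ℕ} (x y : Fin N → ℝ) : ℝ :=
  (∑ i, center x i * center y i) /
    (Real.sqrt (∑ i, center x i ^ 2) * Real.sqrt (∑ i, center y i ^ 2))

noncomputable def Corr {N d : ℕ} (X : Matrix (Fin N) (Fin d) ℝ) : ℝ :=
  (1 / (d * ((d : ℝ) - 1))) *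
    ∑ p ∈ Finset.univ.offDiag, |pearson (fun i => X i p.1) (fun i => X i p.2)|

noncomputable def rowNorm {N d : ℕ} (X : Matrix (Fin N) (Fin d) ℝ) (i : Fin N) : ℝ :=
  Real.sqrt (∑ k, X i k ^ 2)

noncomputable def rowDist {N d : ℕ} (X : Matrix (Fin N) (Fin d) ℝ) (i j : Fin N) : ℝ :=
  (1 / 2) * Real.sqrt (∑ k, (X i k / rowNorm X i - X j k / rowNorm X j) ^ 2)

noncomputable def SMV {N d : ℕ} (X : Matrix (Fin N) (Fin d) ℝ) : ℝ :=
  (1 / (N * ((N : ℝ) - 1))) * ∑ p ∈ Finset.univ.offDiag, rowDist X p.1 p.2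

open Finset

section Pearson

variable {N : ℕ}

theorem mean_smul (c : ℝ) (x : Fin N → ℝ) : mean (c • x) = c * mean x := by
  simp only [mean, Pi.smul_apply, smul_eq_mul, ← mul_sum, mul_div_assoc]

theorem center_smul (c : ℝ) (x : Fin N → ℝ) : center (c • x) = c • center x := by
  funext i
  simp only [center, mean_smul, Pi.smul_apply, smul_eq_mul, mul_sub]

theorem sum_sq_smul (c : ℝ) (x : Fin N → ℝ) : ∑ i, (c • x) i ^ 2 = c ^ 2 * ∑ i, x i ^ 2 := by
  simp only [Pi.smul_apply, smul_eq_mul, mul_pow, mul_sum]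

theorem abs_pearson_smul_smul {s t : ℝ} (hs : s ≠ 0) (ht : t ≠ 0) (x y : Fin N → ℝ) :
    |pearson (s • x) (t • y)| = |pearson x y| := by
  have hst : 0 < |s| * |t| := by positivity
  have hnum : ∑ i, center (s • x) i * center (t • y) i
      = s * t * ∑ i, center x i * center y i := by
    simp only [center_smul, Pi.smul_apply, smul_eq_mul, mul_sum]
    exact sum_congr rfl fun i _ => by ring
  have hden : Real.sqrt (∑ i, center (s • x) i ^ 2) * Real.sqrt (∑ i, center (t • y) i ^ 2)
      = |s| * |t| * (Real.sqrt (∑ i, center x i ^ 2) * Real.sqrt (∑ i, center y i ^ 2)) := by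
    rw [center_smul, center_smul, sum_sq_smul, sum_sq_smul, Real.sqrt_mul (sq_nonneg _),
      Real.sqrt_mul (sq_nonneg _), Real.sqrt_sq_eq_abs, Real.sqrt_sq_eq_abs]
    ring
  rw [pearson, pearson, hnum, hden, abs_div, abs_mul, abs_mul s t, abs_mul (|s| * |t|),
    abs_of_pos hst, mul_div_mul_left _ _ hst.ne', abs_div]

theorem pearson_self {x : Fin N → ℝ} (hx : center x ≠ 0) : pearson x x = 1 := by
  have hpos : 0 < ∑ i, center x i ^ 2 := by
    obtain ⟨i, hi⟩ := Function.ne_iff.mp hx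
    exact sum_pos' (fun _ _ => sq_nonneg _) ⟨i, mem_univ i, sq_pos_of_ne_zero hi⟩
  rw [pearson, Real.mul_self_sqrt hpos.le, ← div_self hpos.ne']
  simp only [sq]

end Pearson

section Matrix

variable {N d : ℕ} {X : Matrix (Fin N) (Fin d) ℝ}

theorem Corr_eq_one_of_abs_pearson_eq_one (hd : 2 ≤ d)
    (h : ∀ j k, |pearson (fun i => X i j) (fun i => X i k)| = 1) : Corr X = 1 := by
  have hd' : (2 : ℝ) ≤ d := by exact_mod_cast hd
  have hcard : ((d * d - d : ℕ) : ℝ) = d * ((d : ℝ) - 1) := by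
    rw [Nat.cast_sub (Nat.le_mul_self d)]
    push_cast
    ring
  rw [Corr, sum_congr rfl fun p _ => h p.1 p.2, sum_const, offDiag_card, card_univ,
    Fintype.card_fin, nsmul_one, hcard, one_div, inv_mul_cancel₀ (by nlinarith)]

theorem SMV_eq_zero_of_rowDist_eq_zero (h : ∀ i j, rowDist X i j = 0) : SMV X = 0 := by
  simp only [SMV, h, sum_const_zero, mul_zero]

theorem div_rowNorm_of_eq_mul {a : Fin N → ℝ} {v : Fin d → ℝ} {i : Fin N} (hai : 0 < a i)
    (hX : ∀ k, X i k = a i * v k) (k : Fin d) :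
    X i k / rowNorm X i = v k / Real.sqrt (∑ l, v l ^ 2) := by
  have hnorm : rowNorm X i = a i * Real.sqrt (∑ l, v l ^ 2) := by
    simp only [rowNorm, hX, mul_pow, ← mul_sum]
    rw [Real.sqrt_mul (sq_nonneg _), Real.sqrt_sq hai.le]
  rw [hnorm, hX, mul_div_mul_left _ _ hai.ne']

theorem rowDist_eq_zero_of_eq_mul {a : Fin N → ℝ} {v : Fin d → ℝ} (ha : ∀ i, 0 < a i)
    (hX : ∀ i k, X i k = a i * v k) (i j : Fin N) : rowDist X i j = 0 := by
  simp only [rowDist, div_rowNorm_of_eq_mul (ha i) (hX i), div_rowNorm_of_eq_mul (ha j) (hX j),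
    sub_self, sq, mul_zero, sum_const_zero, Real.sqrt_zero]

end Matrix

theorem stmt12_general {N d : ℕ} (hd : 2 ≤ d) (X : Matrix (Fin N) (Fin d) ℝ)
    (a : Fin N → ℝ) (v : Fin d → ℝ) (ha : ∀ i, 0 < a i)
    (hX : ∀ i k, X i k = a i * v k)
    (hnc : ∀ j : Fin d, center (fun i => X i j) ≠ 0) :
    Corr X = 1 ∧ SMV X = 0 := by
  have hcol : ∀ j, (fun i => X i j) = v j • a :=
    fun j => funext fun i => (hX i j).trans (mul_comm _ _)
  have hv : ∀ j, v j ≠ 0 := fun j h0 =>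
    hnc j (by rw [hcol, center_smul, h0, zero_smul])
  have ha_center : center a ≠ 0 := fun h0 =>
    hnc ⟨0, by omega⟩ (by rw [hcol, center_smul, h0, smul_zero])
  refine ⟨Corr_eq_one_of_abs_pearson_eq_one hd fun j k => ?_,
    SMV_eq_zero_of_rowDist_eq_zero (rowDist_eq_zero_of_eq_mul ha hX)⟩
  rw [hcol, hcol, abs_pearson_smul_smul (hv j) (hv k), pearson_self ha_center, abs_one]

theorem stmt12 {N d : ℕ} (hd : 2 ≤ d) (X : Matrix (Fin N) (Fin d) ℝ)
    (a : Fin N → ℝ) (v : Fin d → ℝ) (ha : ∀ i, 0 < a i) (hv : v ≠ 0)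
    (hX : ∀ i k, X i k = a i * v k)
    (hnc : ∀ j : Fin d, center (fun i => X i j) ≠ 0) :
    Corr X = 1 ∧ SMV X = 0 :=
  stmt12_general hd X a v ha hX hnc
end
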